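/- In the K variant of λ∀[], for all types S, T and any context variable δ, under the context stack consisting of a single empty context: ⊢ λx:(∀γ.[γ]S → [γ]T). ⟨i:δ⟩λy:S. unq₁( (x⌈δ, S⌉) ⟨i:δ, y:S⟩y ; (i, y) ) : (∀γ.[γ]S → [γ]T) → [δ](S → T); that is, the polymorphic-context analogue of the λ○ axiom (○A → ○B) → ○(A → B) is derivable, in contrast to its underivable non-polymorphic version (□A → □B) → □(A → B). -/

import Mathlib

/-! # Fitch-style contextual modal type theory with polymorphic contexts, λ∀[] -/

/-- Context variables γ, δ. -/
abbrev CVar := ℕ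

/-- Types of λ∀[]: base types, function types, contextual modal types `[S⃗]T`
(where the type sequence `S⃗` may contain context variables), and
context-polymorphic types `∀γ.T`. -/
inductive Ty : Type where
  | base : ℕ → Ty
  | arr : Ty → Ty → Ty
  | box : List (Ty ⊕ CVar) → Ty → Ty
  | all : CVar → Ty → Ty

/-- Type sequences: entries are types or context variables. -/
abbrev TyS := List (Ty ⊕ CVar)

/-- A context entry: an ordinary binding `x : T` or a weakening-variable
binding `i : γ`. -/
abbrev CtxE := (ℕ × Ty) ⊕ (ℕ × CVar)

abbrev Ctx := List CtxE
abbrev Stack := List Ctx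

/-- Terms of λ∀[]. -/
inductive Tm : Type where
  | var : ℕ → Tm
  | lam : ℕ → Ty → Tm → Tm
  | app : Tm → Tm → Tm
  | quo : Ctx → Tm → Tm
  | unq : ℕ → Tm → List (Tm ⊕ ℕ) → Tm
  | cabs : CVar → Tm → Tm          -- Λγ.M
  | capp : Tm → TyS → Tm           -- M⌈S⃗⌉

/-- Term sequences: entries are terms or weakening variables. -/
abbrev TmS := List (Tm ⊕ ℕ)

/-- The range `rg(Γ)` of a context, a type sequence. -/
def rngC (Γ : Ctx) : TyS :=
  Γ.map (Sum.elim (fun p => Sum.inl p.2) (fun p => Sum.inr p.2))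

/-- The domain of a context, a list of (ordinary or weakening) variables. -/
def domC (Γ : Ctx) : List ℕ := Γ.map (Sum.elim Prod.fst Prod.fst)

/-- The domain of a context as a term sequence (variables and weakening
variables). -/
def domSeq (Γ : Ctx) : TmS :=
  Γ.map (Sum.elim (fun p => Sum.inl (Tm.var p.1)) (fun p => Sum.inr p.1))

/-- Free context variables of a type. -/
def Ty.fvc : Ty → Finset CVar
  | .base _ => ∅
  | .arr S T => S.fvc ∪ T.fvc
  | .all γ T => T.fvc \ {γ}
  | .box Ss T =>
      (Ss.attach.map (fun ⟨e, he⟩ =>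
        match e with
        | .inl S => S.fvc
        | .inr γ => {γ})).foldr (· ∪ ·) ∅ ∪ T.fvc
termination_by T => sizeOf T
decreasing_by
  all_goals simp_wf
  all_goals try omega
  all_goals (have := List.sizeOf_lt_of_mem he; simp_all; omega)

/-- Free context variables of a type sequence. -/
def fvcS (Ss : TyS) : Finset CVar :=
  (Ss.map (Sum.elim Ty.fvc (fun γ => {γ}))).foldr (· ∪ ·) ∅

/-- Free context variables of a context. -/
def fvcC (Γ : Ctx) : Finset CVar :=
  (Γ.map (Sum.elim (fun p => p.2.fvc) (fun p => {p.2}))).foldr (· ∪ ·) ∅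

/-- Free context variables of a context stack. -/
def fvcStack (Ψ : Stack) : Finset CVar := (Ψ.map fvcC).foldr (· ∪ ·) ∅

/-- Context substitution `T[S⃗/γ]` on types. -/
def Ty.csub (Ss : TyS) (γ : CVar) : Ty → Ty
  | .base n => .base n
  | .arr A B => .arr (A.csub Ss γ) (B.csub Ss γ)
  | .all δ T => if δ = γ then .all δ T else .all δ (T.csub Ss γ)
  | .box Ts T =>
      .box (Ts.attach.flatMap (fun ⟨e, he⟩ =>
        match e with
        | .inl S => [Sum.inl (S.csub Ss γ)]
        | .inr δ => if δ = γ then Ss else [Sum.inr δ])) (T.csub Ss γ)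
termination_by T => sizeOf T
decreasing_by
  all_goals simp_wf
  all_goals try omega
  all_goals (have := List.sizeOf_lt_of_mem he; simp_all; omega)

/-- Context substitution on type sequences. -/
def csubS (Ss : TyS) (γ : CVar) (Ts : TyS) : TyS :=
  Ts.flatMap (fun e =>
    match e with
    | .inl S => [Sum.inl (S.csub Ss γ)]
    | .inr δ => if δ = γ then Ss else [Sum.inr δ])

/-- Substitution contents `σ`: entries `M/x` (term for variable) or `M⃗/i`
(term sequence for weakening variable). -/
abbrev Subc := List ((ℕ × Tm) ⊕ (ℕ × TmS))

/-- Image of an ordinary variable under a substitution content. -/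
def varImg (σ : Subc) (x : ℕ) : Option Tm :=
  σ.findSome? (fun e =>
    match e with
    | .inl (y, N) => if y = x then some N else none
    | .inr _ => none)

/-- Image of a weakening variable under a substitution content. -/
def wvarImg (σ : Subc) (i : ℕ) : Option TmS :=
  σ.findSome? (fun e =>
    match e with
    | .inr (j, Ns) => if j = i then some Ns else none
    | .inl _ => none)

/-- Level-`l` term substitution `M[σ]_l` (α-renaming handled implicitly,
following the paper's convention). -/
def Tm.subst (σ : Subc) : ℕ → Tm → Tm
  | l, .var x => if l = 1 then (varImg σ x).getD (.var x) else .var x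
  | l, .lam x T M => .lam x T (M.subst σ l)
  | l, .app M N => .app (M.subst σ l) (N.subst σ l)
  | l, .quo Γ M => .quo Γ (M.subst σ (l + 1))
  | l, .unq k M Ns =>
      .unq k (if l ≤ k then M else M.subst σ (l - k))
        (Ns.attach.flatMap (fun ⟨e, he⟩ =>
          match e with
          | .inl N => [Sum.inl (N.subst σ l)]
          | .inr i => if l = 1 then (wvarImg σ i).getD [Sum.inr i] else [Sum.inr i]))
  | l, .cabs γ M => .cabs γ (M.subst σ l)
  | l, .capp M Ts => .capp (M.subst σ l) Ts
termination_by l M => sizeOf M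
decreasing_by
  all_goals simp_wf
  all_goals try omega
  all_goals (have := List.sizeOf_lt_of_mem he; simp_all; omega)

/-- A name fresh with respect to a finite set of names. -/
def freshName (V : Finset ℕ) : ℕ := (V.sup id) + 1

/-- `genSym`: generate a context for the type sequence `S⃗` consisting of fresh
(ordinary or weakening) variables avoiding `V` (processing `S⃗` from the
right, as in the paper). -/
def genSymRev (V : Finset ℕ) : TyS → Ctx
  | [] => []
  | e :: rest =>
      let x := freshName V
      (genSymRev (insert x V) rest) ++
        [match e with
         | .inl T => Sum.inl (x, T)
         | .inr γ => Sum.inr (x, γ)]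

def genSym (V : Finset ℕ) (Ss : TyS) : Ctx := genSymRev V Ss.reverse

/-- The auxiliary function `weaken%`, processing a context entry by entry:
each binding `i : γ` is replaced by a freshly named context for `S⃗` and the
substitution `dom(Δ')/i` is recorded. -/
def weakenGo (γ : CVar) (Ss : TyS) : Ctx → Ctx → Subc → Ctx × Subc
  | [], Δ, σ => (Δ, σ)
  | (Sum.inl (x, T)) :: Γ, Δ, σ =>
      weakenGo γ Ss Γ (Δ ++ [Sum.inl (x, T.csub Ss γ)]) σ
  | (Sum.inr (i, δ)) :: Γ, Δ, σ =>
      if δ = γ then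
        let Δ' := genSym (domC Γ ++ domC Δ).toFinset Ss
        weakenGo γ Ss Γ (Δ ++ Δ') (σ ++ [Sum.inr (i, domSeq Δ')])
      else weakenGo γ Ss Γ (Δ ++ [Sum.inr (i, δ)]) σ

/-- `weaken_{γ,S⃗}(Γ) = (Δ, σ)`. -/
def weaken (γ : CVar) (Ss : TyS) (Γ : Ctx) : Ctx × Subc := weakenGo γ Ss Γ [] []

/-- Context substitution `M[S⃗/γ]` on terms; on a quotation `⟨Γ⟩M` it is
`⟨Δ⟩(M[S⃗/γ][σ]₁)` where `(Δ, σ) = weaken_{γ,S⃗}(Γ)`. -/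
def Tm.csub (Ss : TyS) (γ : CVar) : Tm → Tm
  | .var x => .var x
  | .lam x T M => .lam x (T.csub Ss γ) (M.csub Ss γ)
  | .app M N => .app (M.csub Ss γ) (N.csub Ss γ)
  | .quo Γ M =>
      .quo (weaken γ Ss Γ).1 ((M.csub Ss γ).subst (weaken γ Ss Γ).2 1)
  | .unq n M Ns =>
      .unq n (M.csub Ss γ)
        (Ns.attach.map (fun ⟨e, he⟩ =>
          match e with
          | .inl N => Sum.inl (N.csub Ss γ)
          | .inr i => Sum.inr i))
  | .cabs δ M => if δ = γ then .cabs δ M else .cabs δ (M.csub Ss γ)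
  | .capp M Ts => .capp (M.csub Ss γ) (csubS Ss γ Ts)
termination_by M => sizeOf M
decreasing_by
  all_goals simp_wf
  all_goals try omega
  all_goals (have := List.sizeOf_lt_of_mem he; simp_all; omega)

/-- Free context variables of a term. -/
def Tm.fvc : Tm → Finset CVar
  | .var _ => ∅
  | .lam _ T M => T.fvc ∪ M.fvc
  | .app M N => M.fvc ∪ N.fvc
  | .quo Γ M => fvcC Γ ∪ M.fvc
  | .unq _ M Ns =>
      M.fvc ∪ (Ns.attach.map (fun ⟨e, he⟩ =>
        match e with
        | .inl N => N.fvc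
        | .inr _ => ∅)).foldr (· ∪ ·) ∅
  | .cabs γ M => M.fvc \ {γ}
  | .capp M Ts => M.fvc ∪ fvcS Ts
termination_by M => sizeOf M
decreasing_by
  all_goals simp_wf
  all_goals try omega
  all_goals (have := List.sizeOf_lt_of_mem he; simp_all; omega)

/-- The four modal variants. -/
inductive Variant : Type where
  | K | T | K4 | S4

/-- Admissible unquotation levels for each variant. -/
def Variant.allows : Variant → ℕ → Prop
  | .K, n => n = 1
  | .T, n => n ≤ 1
  | .K4, n => 1 ≤ n
  | .S4, _ => True

mutual
/-- Typing judgment `Ψ ⊢ M : T` of λ∀[] (variant `v`). -/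
inductive Typed (v : Variant) : Stack → Tm → Ty → Prop where
  | var {Γ : Ctx} {Ψ : Stack} {x : ℕ} {T : Ty} :
      Sum.inl (x, T) ∈ Γ → Typed v (Γ :: Ψ) (.var x) T
  | lam {Γ : Ctx} {Ψ : Stack} {x : ℕ} {T S : Ty} {M : Tm} :
      Typed v ((Γ ++ [Sum.inl (x, T)]) :: Ψ) M S →
      Typed v (Γ :: Ψ) (.lam x T M) (.arr T S)
  | app {Γ : Ctx} {Ψ : Stack} {M N : Tm} {T S : Ty} :
      Typed v (Γ :: Ψ) M (.arr T S) → Typed v (Γ :: Ψ) N T →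
      Typed v (Γ :: Ψ) (.app M N) S
  | quo {Γ : Ctx} {Ψ : Stack} {M : Tm} {T : Ty} :
      Typed v (Γ :: Ψ) M T → Typed v Ψ (.quo Γ M) (.box (rngC Γ) T)
  | unq {Ψ Δs : Stack} {M : Tm} {S : Ty} {n : ℕ} {Ns : TmS} {Ts : TyS} :
      v.allows n → Δs.length = n →
      Typed v Ψ M (.box Ts S) →
      TypedSeq v (Δs ++ Ψ) Ns Ts →
      Typed v (Δs ++ Ψ) (.unq n M Ns) S
  | poly {Ψ : Stack} {M : Tm} {T : Ty} {γ : CVar} :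
      Typed v Ψ M T → γ ∉ fvcStack Ψ →
      Typed v Ψ (.cabs γ M) (.all γ T)
  | inst {Ψ : Stack} {M : Tm} {T : Ty} {γ : CVar} {Ss : TyS} :
      Typed v Ψ M (.all γ T) →
      Typed v Ψ (.capp M Ss) (T.csub Ss γ)

/-- Sequence typing judgment `Ψ ⊢ M⃗ : S⃗` ((Unit), (Seq) and (SeqC) rules). -/
inductive TypedSeq (v : Variant) : Stack → TmS → TyS → Prop where
  | nil {Ψ : Stack} : TypedSeq v Ψ [] []
  | consT {Ψ : Stack} {Ns : TmS} {Ts : TyS} {M : Tm} {T : Ty} :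
      TypedSeq v Ψ Ns Ts → Typed v Ψ M T →
      TypedSeq v Ψ (Ns ++ [Sum.inl M]) (Ts ++ [Sum.inl T])
  | consC {Γ : Ctx} {Ψ : Stack} {Ns : TmS} {Ts : TyS} {i : ℕ} {γ : CVar} :
      TypedSeq v (Γ :: Ψ) Ns Ts → Sum.inr (i, γ) ∈ Γ →
      TypedSeq v (Γ :: Ψ) (Ns ++ [Sum.inr i]) (Ts ++ [Sum.inr γ])
end

/-! Instantiating `x` at the context `δ, S` turns it into a map `[δ, S]S → [δ, S]T`: the
instantiation only touches the boxes because `γ` is not free in `S` and `T`. Applied to the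
quotation `⟨i:δ, y:S⟩y` it yields a box `[δ, S]T`, and unquoting it one level down with the
substitution `(i, y)` gives a term of type `T` under `y : S` inside the quotation `⟨i:δ⟩`. -/

theorem Ty.csub_box (Ss Ts : TyS) (γ : CVar) (T : Ty) :
    (Ty.box Ts T).csub Ss γ = .box (csubS Ss γ Ts) (T.csub Ss γ) := by
  rw [Ty.csub, csubS]
  conv_rhs => rw [← List.attach_map_subtype_val Ts, List.flatMap_map]
  congr 2
  funext ⟨e, _⟩
  cases e <;> rfl

theorem Ty.fvc_box (Ts : TyS) (T : Ty) : (Ty.box Ts T).fvc = fvcS Ts ∪ T.fvc := by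
  rw [Ty.fvc, fvcS]
  conv_rhs => rw [← List.attach_map_subtype_val Ts, List.map_map]
  congr 3
  funext ⟨e, _⟩
  cases e <;> rfl

theorem csubS_eq_self {Ss Ts : TyS} {γ : CVar} (hγ : γ ∉ fvcS Ts)
    (hTy : ∀ S, Sum.inl S ∈ Ts → γ ∉ S.fvc → S.csub Ss γ = S) : csubS Ss γ Ts = Ts := by
  induction Ts with
  | nil => rfl
  | cons e Ts ih =>
    simp only [fvcS, List.map_cons, List.foldr_cons, Finset.mem_union, not_or] at hγ
    have hTs : csubS Ss γ Ts = Ts :=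
      ih hγ.2 fun S hS => hTy S (List.mem_cons_of_mem e hS)
    rw [csubS, List.flatMap_cons, ← csubS, hTs]
    rcases e with S | δ
    · simp [hTy S List.mem_cons_self hγ.1]
    · simp only [Sum.elim_inr, Finset.mem_singleton] at hγ
      simp [Ne.symm hγ.1]

theorem Ty.csub_eq_self_of_not_mem_fvc (Ss : TyS) {γ : CVar} {T : Ty} (hγ : γ ∉ T.fvc) :
    T.csub Ss γ = T := by
  induction T using Ty.csub.induct (γ := γ) with
  | case1 => rw [Ty.csub]
  | case2 A B ihA ihB =>
    simp only [Ty.fvc, Finset.mem_union, not_or] at hγ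
    rw [Ty.csub, ihA hγ.1, ihB hγ.2]
  | case3 T => simp [Ty.csub]
  | case4 δ T hδ ih =>
    simp only [Ty.fvc, Finset.mem_sdiff, Finset.mem_singleton, not_and, not_not] at hγ
    rw [Ty.csub, if_neg hδ, ih fun h => hδ (hγ h).symm]
  | case5 Ts T ih ihT =>
    rw [Ty.fvc_box, Finset.mem_union, not_or] at hγ
    rw [Ty.csub_box, csubS_eq_self hγ.1 ih, ihT hγ.2]

theorem Ty.csub_arr_box_of_not_mem_fvc (Ss : TyS) {γ : CVar} {S T : Ty}
    (hS : γ ∉ S.fvc) (hT : γ ∉ T.fvc) :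
    (Ty.arr (.box [Sum.inr γ] S) (.box [Sum.inr γ] T)).csub Ss γ =
      .arr (.box Ss S) (.box Ss T) := by
  simp [Ty.csub, Ty.csub_box, csubS, Ty.csub_eq_self_of_not_mem_fvc Ss hS,
    Ty.csub_eq_self_of_not_mem_fvc Ss hT]

theorem Variant.allows_one (v : Variant) : v.allows 1 := by
  cases v <;> simp [Variant.allows]

theorem typed_poly_axiom (v : Variant) (Γ : Ctx) (Ψ : Stack) (x y i : ℕ) (γ δ : CVar)
    {S T : Ty} (hS : γ ∉ S.fvc) (hT : γ ∉ T.fvc) :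
    Typed v (Γ :: Ψ)
      (.lam x (.all γ (.arr (.box [Sum.inr γ] S) (.box [Sum.inr γ] T)))
        (.quo [Sum.inr (i, δ)]
          (.lam y S
            (.unq 1
              (.app (.capp (.var x) [Sum.inr δ, Sum.inl S])
                    (.quo [Sum.inr (i, δ), Sum.inl (y, S)] (.var y)))
              [Sum.inr i, Sum.inl (.var y)]))))
      (.arr (.all γ (.arr (.box [Sum.inr γ] S) (.box [Sum.inr γ] T)))
            (.box [Sum.inr δ] (.arr S T))) := by
  set A := Ty.all γ (.arr (.box [Sum.inr γ] S) (.box [Sum.inr γ] T))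
  set Ψx : Stack := (Γ ++ [Sum.inl (x, A)]) :: Ψ
  have hInst : Typed v Ψx (.capp (.var x) [Sum.inr δ, Sum.inl S])
      (.arr (.box [Sum.inr δ, Sum.inl S] S) (.box [Sum.inr δ, Sum.inl S] T)) := by
    rw [← Ty.csub_arr_box_of_not_mem_fvc _ hS hT]
    exact .inst (.var (by simp [A]))
  have hQuo : Typed v Ψx (.quo [Sum.inr (i, δ), Sum.inl (y, S)] (.var y))
      (.box [Sum.inr δ, Sum.inl S] S) :=
    .quo (.var (by simp))
  have hSeq : TypedSeq v ([[Sum.inr (i, δ), Sum.inl (y, S)]] ++ Ψx)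
      [Sum.inr i, Sum.inl (.var y)] [Sum.inr δ, Sum.inl S] :=
    .consT (Ns := [Sum.inr i]) (Ts := [Sum.inr δ])
      (.consC (Ns := []) (Ts := []) .nil (by simp)) (.var (by simp))
  have hUnq := Typed.unq v.allows_one rfl (.app hInst hQuo) hSeq
  exact .lam (.quo (.lam hUnq))

/-- In the K variant of λ∀[], the polymorphic-context analogue of the λ○ axiom
`(○A → ○B) → ○(A → B)` is derivable: for all types `S T` and any context
variable `δ`, under the context stack consisting of a single empty context,
`⊢ λx:(∀γ.[γ]S → [γ]T). ⟨i:δ⟩λy:S. unq₁((x⌈δ, S⌉) ⟨i:δ, y:S⟩y ; (i, y))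
   : (∀γ.[γ]S → [γ]T) → [δ](S → T)`
(here `x, y` are the variables `0, 1`, `i` is the weakening variable `0`, and
`γ` is a context variable not free in `S`, `T`). -/
theorem poly_axiom_derivable (S T : Ty) (δ : CVar) (γ : CVar)
    (hS : γ ∉ S.fvc) (hT : γ ∉ T.fvc) :
    Typed Variant.K [[]]
      (.lam 0 (.all γ (.arr (.box [Sum.inr γ] S) (.box [Sum.inr γ] T)))
        (.quo [Sum.inr (0, δ)]
          (.lam 1 S
            (.unq 1
              (.app (.capp (.var 0) [Sum.inr δ, Sum.inl S])
                    (.quo [Sum.inr (0, δ), Sum.inl (1, S)] (.var 1)))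
              [Sum.inr 0, Sum.inl (.var 1)]))))
      (.arr (.all γ (.arr (.box [Sum.inr γ] S) (.box [Sum.inr γ] T)))
            (.box [Sum.inr δ] (.arr S T))) :=
  typed_poly_axiom .K [] [] 0 1 0 γ δ hS hT
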